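/- (Tender measurement lemma) Let (ρ_a)_{a∈A} be a finite family of density operators on ℂ^D, let (D_b)_{b∈B} be a POVM (a finite family of positive semidefinite operators on ℂ^D with ∑_{b∈B} D_b = I), let φ : A → B be a map, and let λ > 0 be such that 1 − Tr(ρ_a D_{φ(a)}) ≤ λ for every a ∈ A. Then for every a ∈ A: ‖ρ_a − ∑_{b∈B} √(D_b) ρ_a √(D_b)‖₁ ≤ √(8λ) + λ. -/

import Mathlib

open scoped ComplexOrder Matrix

namespace QIT

variable {d : ℕ}

/-- A density operator: positive semidefinite with trace 1. -/
def IsDensity (ρ : Matrix (Fin d) (Fin d) ℂ) : Prop :=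
  ρ.PosSemidef ∧ ρ.trace = 1

/-- A pure state: a rank-one orthogonal projection. -/
def IsPure (ρ : Matrix (Fin d) (Fin d) ℂ) : Prop :=
  ρ.IsHermitian ∧ ρ * ρ = ρ ∧ ρ.rank = 1

/-- The positive semidefinite square root (the former `Matrix.PosSemidef.sqrt`). -/
noncomputable def psdSqrt {n : Type*} [Fintype n] [DecidableEq n] {A : Matrix n n ℂ}
    (hA : A.PosSemidef) : Matrix n n ℂ :=
  (hA.isHermitian.eigenvectorUnitary : Matrix n n ℂ) *
    Matrix.diagonal ((↑) ∘ (√·) ∘ hA.isHermitian.eigenvalues) *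
    (star hA.isHermitian.eigenvectorUnitary : Matrix n n ℂ)

/-- Trace norm of a matrix: `Tr √(Aᴴ A)`. -/
noncomputable def traceNorm (A : Matrix (Fin d) (Fin d) ℂ) : ℝ :=
  ((psdSqrt (Matrix.posSemidef_conjTranspose_mul_self A)).trace).re


/-! For Hermitian `X` and every Hermitian involution `S` one has `Re Tr(S X) ≤ Tr |X| = ‖X‖₁`,
with equality for `S = sgn X`; this gives the triangle inequality for Hermitian matrices and
reduces trace-norm bounds to bounds on `Re Tr(S X)`.

Split the sum at `b = φ a`. The remaining terms are positive with total trace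
`Tr(ρ (1 - D_{φ a})) ≤ λ`. For `Q = √D_{φ a}` write `ρ - QρQ = (1 - Q)ρ + Qρ(1 - Q)`; the
Cauchy–Schwarz inequality for `⟨x, y⟩ = Tr(y ρ xᴴ)` bounds both parts of `Tr(S (ρ - QρQ))` by
`√Tr(ρ (1 - Q)²)`, and `Tr(ρ (1 - Q)²) ≤ 1 - Tr(ρ D_{φ a}) ≤ λ` because `D_{φ a} ≤ Q`.
Hence the disturbance is at most `2√λ + λ ≤ √(8λ) + λ`. -/

open scoped MatrixOrder

lemma le_sqrt_of_le_one {A : Type*} [PartialOrder A] [Ring A] [StarRing A] [TopologicalSpace A]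
    [StarOrderedRing A] [Algebra ℝ A] [ContinuousFunctionalCalculus ℝ A IsSelfAdjoint]
    [NonnegSpectrumClass ℝ A] [IsSemitopologicalRing A] [T2Space A]
    {a : A} (h0 : 0 ≤ a) (h1 : a ≤ 1) : a ≤ CFC.sqrt a := by
  rw [CFC.sqrt_eq_real_sqrt a, cfcₙ_eq_cfc]
  conv_lhs => rw [← cfc_id' ℝ a]
  refine cfc_mono (a := a) (f := fun x => x) (g := Real.sqrt) fun x hx => ?_
  have hx0 : 0 ≤ x := spectrum_nonneg_of_nonneg h0 hx
  have hx1 : x ≤ 1 := by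
    rw [← map_one (algebraMap ℝ A), le_algebraMap_iff_spectrum_le] at h1
    exact h1 x hx
  exact Real.le_sqrt_of_sq_le (by nlinarith)

section Matrix

variable {n : Type*} [Fintype n] [DecidableEq n]

lemma psdSqrt_eq_cfcSqrt {A : Matrix n n ℂ} (hA : A.PosSemidef) : psdSqrt hA = CFC.sqrt A := by
  rw [CFC.sqrt_eq_cfc, cfc_nnreal_eq_real _ A, hA.1.cfc_eq]
  simp only [Matrix.IsHermitian.cfc, Unitary.conjStarAlgAut_apply, psdSqrt]
  congr 3
  funext i
  simp [Real.coe_sqrt, hA.eigenvalues_nonneg i]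

lemma re_trace_mul_nonneg {A B : Matrix n n ℂ} (hA : 0 ≤ A) (hB : 0 ≤ B) :
    0 ≤ (A * B).trace.re := by
  have hconj : 0 ≤ CFC.sqrt A * B * CFC.sqrt A :=
    conjugate_nonneg_of_nonneg hB (CFC.sqrt_nonneg A)
  rw [← CFC.sqrt_mul_sqrt_self A, ← Matrix.trace_mul_cycle]
  exact (RCLike.nonneg_iff.mp (Matrix.nonneg_iff_posSemidef.mp hconj).trace_nonneg).1

lemma re_trace_mul_le_re_trace_mul {ρ A B : Matrix n n ℂ} (hρ : 0 ≤ ρ) (hAB : A ≤ B) :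
    (ρ * A).trace.re ≤ (ρ * B).trace.re := by
  have h := re_trace_mul_nonneg hρ (sub_nonneg.mpr hAB)
  rwa [mul_sub, Matrix.trace_sub, Complex.sub_re, sub_nonneg] at h

omit [DecidableEq n] in
lemma norm_trace_mul_mul_conjTranspose_le {M : Matrix n n ℂ} (hM : M.PosSemidef)
    (x y : Matrix n n ℂ) :
    ‖(y * M * xᴴ).trace‖ ≤ √(x * M * xᴴ).trace.re * √(y * M * yᴴ).trace.re := by
  let := M.toMatrixSeminormedAddCommGroup hM
  let := M.toMatrixInnerProductSpace hM
  have hnorm : ∀ z : Matrix n n ℂ, ‖z‖ = √(z * M * zᴴ).trace.re := fun z => by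
    rw [norm_eq_sqrt_re_inner (𝕜 := ℂ)]; rfl
  rw [← hnorm, ← hnorm]
  exact norm_inner_le_norm (𝕜 := ℂ) x y

lemma re_trace_mul_le_re_trace {S P : Matrix n n ℂ} (hS : S.IsHermitian) (hSS : S * S = 1)
    (hP : 0 ≤ P) : (S * P).trace.re ≤ P.trace.re := by
  -- `2 (1 - S) = (1 - S)ᴴ (1 - S)` is positive.
  have hsq : (1 - S) * (1 - S) = (2 : ℂ) • (1 - S) := by
    rw [show (1 - S) * (1 - S) = 1 - 2 • S + S * S by noncomm_ring, hSS]; module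
  have h := re_trace_mul_nonneg (star_mul_self_nonneg (1 - S)) hP
  rw [star_sub, star_one, hS.star_eq, hsq, smul_mul_assoc, Matrix.trace_smul, sub_mul,
    one_mul, Matrix.trace_sub] at h
  simpa using h

lemma re_trace_mul_le_re_trace_abs {S X : Matrix n n ℂ} (hS : S.IsHermitian) (hSS : S * S = 1)
    (hX : X.IsHermitian) : (S * X).trace.re ≤ (CFC.abs X).trace.re := by
  have hpos := re_trace_mul_le_re_trace hS hSS (CFC.posPart_nonneg X)
  have hneg := re_trace_mul_le_re_trace hS.neg (by rw [neg_mul_neg, hSS]) (CFC.negPart_nonneg X)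
  rw [neg_mul, Matrix.trace_neg, Complex.neg_re] at hneg
  rw [← CFC.posPart_add_negPart X hX, Matrix.trace_add, Complex.add_re]
  conv_lhs => rw [← CFC.posPart_sub_negPart X hX, mul_sub, Matrix.trace_sub, Complex.sub_re]
  linarith

lemma exists_involution_mul_eq_abs {X : Matrix n n ℂ} (hX : X.IsHermitian) :
    ∃ S : Matrix n n ℂ, S.IsHermitian ∧ S * S = 1 ∧ S * X = CFC.abs X := by
  have hX' : IsSelfAdjoint X := hX
  -- A sign function that is `1` at `0`, so that `S * S = 1` even when `X` is singular.
  let sign : ℝ → ℝ := fun x => if x < 0 then -1 else 1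
  have hcont : ∀ f : ℝ → ℝ, ContinuousOn f (spectrum ℝ X) :=
    X.finite_real_spectrum.continuousOn
  refine ⟨cfc sign X, cfc_predicate sign X, ?_, ?_⟩
  · rw [← cfc_mul sign sign X (hcont _) (hcont _), ← cfc_one ℝ X hX']
    refine cfc_congr fun x _ => ?_
    simp only [sign]; split_ifs <;> norm_num
  · calc cfc sign X * X = cfc (fun x => sign x * x) X := by
          rw [cfc_mul sign (fun x => x) X (hcont _) (hcont _), cfc_id' ℝ X hX']
      _ = cfc (‖·‖) X := cfc_congr fun x _ => by
          simp only [sign, Real.norm_eq_abs]; split_ifs with h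
          · rw [abs_of_neg h]; ring
          · rw [abs_of_nonneg (not_lt.mp h)]; ring
      _ = CFC.abs X := (CFC.abs_eq_cfc_norm X hX').symm

lemma re_trace_one_sub_sqrt_mul_mul_le {ρ M : Matrix n n ℂ} (hρ : 0 ≤ ρ) (hρ1 : ρ.trace = 1)
    (hM0 : 0 ≤ M) (hM1 : M ≤ 1) :
    ((1 - CFC.sqrt M) * ρ * (1 - CFC.sqrt M)).trace.re ≤ 1 - (ρ * M).trace.re := by
  have hsq : (1 - CFC.sqrt M) * (1 - CFC.sqrt M) = 1 - (2 : ℝ) • CFC.sqrt M + M := by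
    simp only [sub_mul, mul_sub, one_mul, mul_one, CFC.sqrt_mul_sqrt_self M hM0]; module
  have hρM_le_ρQ := re_trace_mul_le_re_trace_mul hρ (le_sqrt_of_le_one hM0 hM1)
  rw [Matrix.trace_mul_cycle, Matrix.trace_mul_comm, hsq]
  simp only [mul_add, mul_sub, mul_one, mul_smul_comm, Matrix.trace_add, Matrix.trace_sub,
    Matrix.trace_smul, hρ1, Complex.add_re, Complex.sub_re, Complex.one_re, Complex.smul_re,
    smul_eq_mul]
  linarith

lemma re_trace_mul_sub_sqrt_mul_mul_sqrt_le {ρ M S : Matrix n n ℂ} (hρ : 0 ≤ ρ)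
    (hρ1 : ρ.trace = 1) (hM0 : 0 ≤ M) (hM1 : M ≤ 1) {lam : ℝ}
    (herr : 1 - (ρ * M).trace.re ≤ lam) (hS : S.IsHermitian) (hSS : S * S = 1) :
    (S * (ρ - CFC.sqrt M * ρ * CFC.sqrt M)).trace.re ≤ 2 * √lam := by
  have hρ' : ρ.PosSemidef := Matrix.nonneg_iff_posSemidef.mp hρ
  set Q := CFC.sqrt M
  set G := 1 - Q
  have hQ : Qᴴ = Q := (CFC.sqrt_nonneg M).isSelfAdjoint
  have hG : Gᴴ = G := by simp [G, hQ]
  have hGρG : (G * ρ * Gᴴ).trace.re ≤ lam := by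
    rw [hG]; exact (re_trace_one_sub_sqrt_mul_mul_le hρ hρ1 hM0 hM1).trans herr
  have hQρQ : (Q * ρ * Qᴴ).trace.re ≤ 1 := by
    rw [hQ, Matrix.trace_mul_cycle, CFC.sqrt_mul_sqrt_self M hM0, Matrix.trace_mul_comm]
    simpa [hρ1] using re_trace_mul_le_re_trace_mul hρ hM1
  have hSρS : (S * ρ * Sᴴ).trace.re = 1 := by
    rw [hS.eq, Matrix.trace_mul_cycle, hSS, one_mul, hρ1, Complex.one_re]
  have hSGρSG : ((S * G) * ρ * (S * G)ᴴ).trace = (G * ρ * Gᴴ).trace := by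
    rw [show (S * G) * ρ * (S * G)ᴴ = S * (G * ρ * Gᴴ) * S by
      rw [Matrix.conjTranspose_mul, hS.eq]; simp only [mul_assoc],
      Matrix.trace_mul_cycle, hSS, one_mul]
  have hsplit :
      (S * (ρ - Q * ρ * Q)).trace = (G * ρ * Sᴴ).trace + (Q * ρ * (S * G)ᴴ).trace := by
    rw [Matrix.conjTranspose_mul, hG, hS.eq, Matrix.trace_mul_comm, ← Matrix.trace_add]
    simp only [G]; congr 1; noncomm_ring
  have hsqrt : ∀ a b : ℝ, a ≤ 1 → b ≤ lam → √a * √b ≤ √lam := fun a b ha hb =>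
    (mul_le_mul (Real.sqrt_le_one.mpr ha) (Real.sqrt_le_sqrt hb) (Real.sqrt_nonneg _)
      zero_le_one).trans_eq (one_mul _)
  calc (S * (ρ - Q * ρ * Q)).trace.re
      = (G * ρ * Sᴴ).trace.re + (Q * ρ * (S * G)ᴴ).trace.re := by rw [hsplit, Complex.add_re]
    _ ≤ ‖(G * ρ * Sᴴ).trace‖ + ‖(Q * ρ * (S * G)ᴴ).trace‖ :=
      add_le_add (Complex.re_le_norm _) (Complex.re_le_norm _)
    _ ≤ √(S * ρ * Sᴴ).trace.re * √(G * ρ * Gᴴ).trace.re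
          + √((S * G) * ρ * (S * G)ᴴ).trace.re * √(Q * ρ * Qᴴ).trace.re :=
      add_le_add (norm_trace_mul_mul_conjTranspose_le hρ' _ _)
        (norm_trace_mul_mul_conjTranspose_le hρ' _ _)
    _ ≤ √lam + √lam := by
      rw [mul_comm (√_) (√(Q * ρ * Qᴴ).trace.re), hSGρSG]
      exact add_le_add (hsqrt _ _ hSρS.le hGρG) (hsqrt _ _ hQρQ hGρG)
    _ = 2 * √lam := by ring

end Matrix

lemma traceNorm_eq_re_trace_abs (A : Matrix (Fin d) (Fin d) ℂ) :
    traceNorm A = (CFC.abs A).trace.re := by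
  rw [traceNorm, psdSqrt_eq_cfcSqrt]; rfl

lemma traceNorm_of_nonneg {A : Matrix (Fin d) (Fin d) ℂ} (hA : 0 ≤ A) :
    traceNorm A = A.trace.re := by
  rw [traceNorm_eq_re_trace_abs, CFC.abs_of_nonneg A hA]

lemma traceNorm_neg (A : Matrix (Fin d) (Fin d) ℂ) : traceNorm (-A) = traceNorm A := by
  rw [traceNorm_eq_re_trace_abs, traceNorm_eq_re_trace_abs, CFC.abs_neg]

lemma traceNorm_le_of_forall_involution {X : Matrix (Fin d) (Fin d) ℂ} {c : ℝ} (hX : X.IsHermitian)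
    (h : ∀ S : Matrix (Fin d) (Fin d) ℂ, S.IsHermitian → S * S = 1 → (S * X).trace.re ≤ c) :
    traceNorm X ≤ c := by
  obtain ⟨S, hS, hSS, hSX⟩ := exists_involution_mul_eq_abs hX
  rw [traceNorm_eq_re_trace_abs, ← hSX]
  exact h S hS hSS

lemma traceNorm_add_le {X Y : Matrix (Fin d) (Fin d) ℂ} (hX : X.IsHermitian)
    (hY : Y.IsHermitian) : traceNorm (X + Y) ≤ traceNorm X + traceNorm Y :=
  traceNorm_le_of_forall_involution (hX.add hY) fun S hS hSS => by
    rw [mul_add, Matrix.trace_add, Complex.add_re, traceNorm_eq_re_trace_abs,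
      traceNorm_eq_re_trace_abs]
    exact add_le_add (re_trace_mul_le_re_trace_abs hS hSS hX)
      (re_trace_mul_le_re_trace_abs hS hSS hY)

lemma traceNorm_sub_le {X Y : Matrix (Fin d) (Fin d) ℂ} (hX : X.IsHermitian)
    (hY : Y.IsHermitian) : traceNorm (X - Y) ≤ traceNorm X + traceNorm Y := by
  simpa only [sub_eq_add_neg, traceNorm_neg] using traceNorm_add_le hX hY.neg

lemma traceNorm_sub_sqrt_mul_mul_sqrt_le {ρ M : Matrix (Fin d) (Fin d) ℂ} (hρ : IsDensity ρ)
    (hM0 : 0 ≤ M) (hM1 : M ≤ 1) {lam : ℝ} (herr : 1 - (ρ * M).trace.re ≤ lam) :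
    traceNorm (ρ - CFC.sqrt M * ρ * CFC.sqrt M) ≤ 2 * √lam := by
  have hρ0 : 0 ≤ ρ := Matrix.nonneg_iff_posSemidef.mpr hρ.1
  have hQρQ : 0 ≤ CFC.sqrt M * ρ * CFC.sqrt M :=
    conjugate_nonneg_of_nonneg hρ0 (CFC.sqrt_nonneg M)
  exact traceNorm_le_of_forall_involution (hρ.1.isHermitian.sub hQρQ.isSelfAdjoint)
    fun S hS hSS => re_trace_mul_sub_sqrt_mul_mul_sqrt_le hρ0 hρ.2 hM0 hM1 herr hS hSS

lemma traceNorm_sum_compl_sqrt_mul_mul_sqrt {B : Type*} [Fintype B] [DecidableEq B]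
    {ρ : Matrix (Fin d) (Fin d) ℂ} (hρ : IsDensity ρ) {Dv : B → Matrix (Fin d) (Fin d) ℂ}
    (hD : ∀ b, 0 ≤ Dv b) (hDsum : ∑ b, Dv b = 1) (b₀ : B) :
    traceNorm (∑ b ∈ {b₀}ᶜ, CFC.sqrt (Dv b) * ρ * CFC.sqrt (Dv b)) = 1 - (ρ * Dv b₀).trace.re := by
  have hρ0 : 0 ≤ ρ := Matrix.nonneg_iff_posSemidef.mpr hρ.1
  have htr : ∀ b, (CFC.sqrt (Dv b) * ρ * CFC.sqrt (Dv b)).trace = (ρ * Dv b).trace := fun b => by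
    rw [Matrix.trace_mul_cycle, CFC.sqrt_mul_sqrt_self _ (hD b), Matrix.trace_mul_comm]
  have hcompl : ∑ b ∈ {b₀}ᶜ, Dv b = 1 - Dv b₀ := by
    rw [← hDsum, Fintype.sum_eq_add_sum_compl b₀, add_sub_cancel_left]
  rw [traceNorm_of_nonneg (Finset.sum_nonneg fun b _ =>
    conjugate_nonneg_of_nonneg hρ0 (CFC.sqrt_nonneg _)), Matrix.trace_sum]
  simp only [htr, ← Matrix.trace_sum, ← Finset.mul_sum, hcompl, mul_sub,
    mul_one, Matrix.trace_sub, hρ.2, Complex.sub_re, Complex.one_re]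

lemma two_mul_sqrt_le_sqrt_eight_mul (x : ℝ) : 2 * √x ≤ √(8 * x) := by
  rcases le_total x 0 with hx | hx
  · simp [Real.sqrt_eq_zero'.mpr hx]
  · refine Real.le_sqrt_of_sq_le ?_
    rw [mul_pow, Real.sq_sqrt hx]
    linarith

theorem tender_measurement_general {D : ℕ} {A B : Type} [Fintype A] [Fintype B]
    (ρ : A → Matrix (Fin D) (Fin D) ℂ) (hρ : ∀ a, IsDensity (ρ a))
    (Dv : B → Matrix (Fin D) (Fin D) ℂ) (hD : ∀ b, (Dv b).PosSemidef)
    (hDsum : ∑ b, Dv b = 1)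
    (φ : A → B) (lam : ℝ)
    (herr : ∀ a, 1 - ((ρ a * Dv (φ a)).trace).re ≤ lam) :
    ∀ a, traceNorm (ρ a - ∑ b, psdSqrt (hD b) * ρ a * psdSqrt (hD b))
        ≤ Real.sqrt (8 * lam) + lam := by
  intro a
  classical
  simp only [psdSqrt_eq_cfcSqrt]
  have hρ0 : 0 ≤ ρ a := Matrix.nonneg_iff_posSemidef.mpr (hρ a).1
  have hD0 : ∀ b, 0 ≤ Dv b := fun b => Matrix.nonneg_iff_posSemidef.mpr (hD b)
  have hK0 : ∀ b, 0 ≤ CFC.sqrt (Dv b) * ρ a * CFC.sqrt (Dv b) := fun b =>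
    conjugate_nonneg_of_nonneg hρ0 (CFC.sqrt_nonneg _)
  have hM1 : Dv (φ a) ≤ 1 := hDsum ▸ Finset.single_le_sum (fun b _ => hD0 b) (Finset.mem_univ _)
  rw [Fintype.sum_eq_add_sum_compl (φ a), ← sub_sub]
  calc _ ≤ traceNorm (ρ a - CFC.sqrt (Dv (φ a)) * ρ a * CFC.sqrt (Dv (φ a)))
          + traceNorm (∑ b ∈ {φ a}ᶜ, CFC.sqrt (Dv b) * ρ a * CFC.sqrt (Dv b)) :=
        traceNorm_sub_le ((hρ a).1.isHermitian.sub (hK0 _).isSelfAdjoint)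
          (Finset.sum_nonneg fun b _ => hK0 b).isSelfAdjoint
    _ ≤ 2 * √lam + lam := by
        rw [traceNorm_sum_compl_sqrt_mul_mul_sqrt (hρ a) hD0 hDsum]
        exact add_le_add (traceNorm_sub_sqrt_mul_mul_sqrt_le (hρ a) (hD0 _) hM1 (herr a)) (herr a)
    _ ≤ √(8 * lam) + lam := by gcongr; exact two_mul_sqrt_le_sqrt_eight_mul lam

/-- Tender measurement lemma: if the POVM `(D_b)` identifies `φ(a)` from `ρ_a`
with error probability at most `λ`, then the induced operation disturbs each
`ρ_a` by at most `√(8λ) + λ` in trace norm. -/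
theorem tender_measurement {D : ℕ} {A B : Type} [Fintype A] [Fintype B]
    (ρ : A → Matrix (Fin D) (Fin D) ℂ) (hρ : ∀ a, IsDensity (ρ a))
    (Dv : B → Matrix (Fin D) (Fin D) ℂ) (hD : ∀ b, (Dv b).PosSemidef)
    (hDsum : ∑ b, Dv b = 1)
    (φ : A → B) (lam : ℝ) (hlam : 0 < lam)
    (herr : ∀ a, 1 - ((ρ a * Dv (φ a)).trace).re ≤ lam) :
    ∀ a, traceNorm (ρ a - ∑ b, psdSqrt (hD b) * ρ a * psdSqrt (hD b))
        ≤ Real.sqrt (8 * lam) + lam :=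
  tender_measurement_general ρ hρ Dv hD hDsum φ lam herr

end QIT
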